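/- arXiv:1710.01929 — 3 statements merged into one kernel-verified Lean document; each statement's English description precedes it below -/
import Mathlib

section
/- Let $n \geq 1$, $p \geq 1$, and $0 < \theta < 1$. Let $q \subset \mathbb{R}^n$ be a cube centered at a point $x_0$ with side length $\ell$, and let $\theta q$ denote the cube with the same center and side length $\theta \ell$. Then for every affine function $a : \mathbb{R}^n \to \mathbb{R}$ one has $\|a\|_{L^p(q)} \leq \theta^{-(n/p + 1)} \|a\|_{L^p(\theta q)}$. -/
/-!
Translate the cube to the origin and write `θ q` as `θ • Q`. The substitution `y ↦ θ • y` turns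
`∫_{θ • Q} |L y + c|^p` into `θ^n ∫_Q |θ L y + c|^p`, so it suffices that
`θ^p ∫_Q |L y + c|^p ≤ ∫_Q |θ L y + c|^p`. Since `Q = -Q`, both sides may be averaged with their
images under `y ↦ -y`, which reduces this to the pointwise inequality
`θ^p (|s + c|^p + |s - c|^p) ≤ |θ s + c|^p + |θ s - c|^p`. The right side is
`g(c)` and the left side is `g(θ c)` for the even convex function `g t = |θ s + t|^p + |θ s - t|^p`,
which is nondecreasing in `|t|`.
-/

open MeasureTheory Set Module Bornology Matrix Pointwise

theorem convexOn_abs_rpow {p : ℝ} (hp : 1 ≤ p) : ConvexOn ℝ univ fun x : ℝ => |x| ^ p := by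
  have himg : (fun x : ℝ => |x|) '' univ = Ici 0 := by
    ext x
    simp only [image_univ, mem_range, mem_Ici]
    exact ⟨fun ⟨y, hy⟩ => hy ▸ abs_nonneg y, fun hx => ⟨x, abs_of_nonneg hx⟩⟩
  refine ConvexOn.comp (g := fun x : ℝ => x ^ p) ?_ convexOn_univ_norm ?_
  · simpa [himg] using convexOn_rpow hp
  · rw [himg]
    exact fun x hx y _ hxy => Real.rpow_le_rpow hx hxy (by linarith)

theorem abs_add_rpow_add_abs_sub_rpow_le {p : ℝ} (hp : 1 ≤ p) (s : ℝ) {t t' : ℝ}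
    (h : |t| ≤ |t'|) : |s + t| ^ p + |s - t| ^ p ≤ |s + t'| ^ p + |s - t'| ^ p := by
  set g : ℝ → ℝ := fun t => |s + t| ^ p + |s - t| ^ p
  have hg : ConvexOn ℝ univ g := by
    have hsub : (fun t => |s - t| ^ p) = fun t => |-s + t| ^ p := by
      ext t; rw [abs_sub_comm, neg_add_eq_sub]
    refine ((convexOn_abs_rpow hp).translate_right s).add ?_
    rw [hsub]
    exact (convexOn_abs_rpow hp).translate_right (-s)
  have hseg : t ∈ segment ℝ (-t') t' := by
    rw [segment_eq_uIcc, mem_uIcc]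
    have := abs_le.1 h
    cases abs_cases t' <;> grind
  have hmax := hg.le_max_of_mem_segment (mem_univ _) (mem_univ _) hseg
  have heven : g (-t') = g t' := by simp only [g, sub_neg_eq_add, ← sub_eq_add_neg, add_comm]
  rwa [heven, max_self] at hmax

theorem rpow_mul_abs_add_rpow_add_abs_sub_rpow_le {p θ : ℝ} (hp : 1 ≤ p) (hθ0 : 0 ≤ θ)
    (hθ1 : θ ≤ 1) (s c : ℝ) :
    θ ^ p * (|s + c| ^ p + |s - c| ^ p) ≤ |θ * s + c| ^ p + |θ * s - c| ^ p := by
  have hscale (x : ℝ) : θ ^ p * |x| ^ p = |θ * x| ^ p := by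
    rw [← Real.mul_rpow hθ0 (abs_nonneg x), abs_mul, abs_of_nonneg hθ0]
  rw [mul_add, hscale, hscale, mul_add, mul_sub]
  refine abs_add_rpow_add_abs_sub_rpow_le hp (θ * s) ?_
  rw [abs_mul, abs_of_nonneg hθ0]
  exact mul_le_of_le_one_left (abs_nonneg c) hθ1

theorem setIntegral_comp_neg_of_neg_eq {G F : Type*} [MeasurableSpace G] [InvolutiveNeg G]
    [MeasurableNeg G] [NormedAddCommGroup F] [NormedSpace ℝ F] (μ : Measure G) [μ.IsNegInvariant]
    {Q : Set G} (hQ : -Q = Q) (f : G → F) :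
    ∫ y in Q, f (-y) ∂μ = ∫ y in Q, f y ∂μ := by
  conv_lhs => rw [← hQ]
  exact (Measure.measurePreserving_neg μ).setIntegral_preimage_emb measurableEmbedding_neg f Q

section AffineOnSymmetricSet

variable {E : Type*} [NormedAddCommGroup E] [NormedSpace ℝ E] [FiniteDimensional ℝ E]
  [MeasurableSpace E] [BorelSpace E] (μ : Measure E) [μ.IsAddHaarMeasure]
  {p θ : ℝ} {Q : Set E} (L : E →ₗ[ℝ] ℝ) (c : ℝ)

theorem integrableOn_abs_linear_add_rpow (hp : 0 ≤ p) (hQ : IsBounded Q) (d : ℝ) :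
    IntegrableOn (fun y => |d * L y + c| ^ p) Q μ := by
  have hcont : Continuous fun y => |d * L y + c| ^ p :=
    ((continuous_const.mul L.continuous_of_finiteDimensional).add continuous_const).abs.rpow_const
      fun _ => Or.inr hp
  exact (hcont.locallyIntegrable.integrableOn_isCompact hQ.isCompact_closure).mono_set
    subset_closure

theorem setIntegral_abs_linear_sub_rpow_of_neg_eq (hQ : -Q = Q) (d : ℝ) :
    ∫ y in Q, |d * L y - c| ^ p ∂μ = ∫ y in Q, |d * L y + c| ^ p ∂μ := by
  rw [← setIntegral_comp_neg_of_neg_eq μ hQ (fun y => |d * L y + c| ^ p)]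
  congr 1 with y
  rw [map_neg, mul_neg, neg_add_eq_sub, abs_sub_comm]

theorem rpow_mul_setIntegral_abs_linear_add_rpow_le (hp : 1 ≤ p) (hθ0 : 0 ≤ θ) (hθ1 : θ ≤ 1)
    (hQb : IsBounded Q) (hQ : -Q = Q) :
    θ ^ p * ∫ y in Q, |L y + c| ^ p ∂μ ≤ ∫ y in Q, |θ * L y + c| ^ p ∂μ := by
  have hint (d : ℝ) := integrableOn_abs_linear_add_rpow μ L c (p := p) (by linarith) hQb d
  have hint' (d : ℝ) : IntegrableOn (fun y => |d * L y - c| ^ p) Q μ := by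
    simpa [sub_eq_add_neg] using
      integrableOn_abs_linear_add_rpow μ L (-c) (p := p) (by linarith) hQb d
  have hsym (d : ℝ) := setIntegral_abs_linear_sub_rpow_of_neg_eq μ L c hQ (p := p) d
  have hsum : θ ^ p * ∫ y in Q, (|1 * L y + c| ^ p + |1 * L y - c| ^ p) ∂μ ≤
      ∫ y in Q, (|θ * L y + c| ^ p + |θ * L y - c| ^ p) ∂μ := by
    rw [← integral_const_mul]
    refine setIntegral_mono (((hint 1).add (hint' 1)).const_mul _) ((hint θ).add (hint' θ))
      fun y => ?_
    simpa using rpow_mul_abs_add_rpow_add_abs_sub_rpow_le hp hθ0 hθ1 (L y) c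
  rw [integral_add (hint 1) (hint' 1), integral_add (hint θ) (hint' θ), hsym, hsym] at hsum
  simp only [one_mul] at hsum
  linarith

theorem rpow_mul_setIntegral_abs_linear_add_rpow_le_smul (hp : 1 ≤ p) (hθ0 : 0 < θ)
    (hθ1 : θ ≤ 1) (hQb : IsBounded Q) (hQ : -Q = Q) :
    θ ^ (finrank ℝ E + p) * ∫ y in Q, |L y + c| ^ p ∂μ ≤ ∫ y in θ • Q, |L y + c| ^ p ∂μ := by
  have hscale := Measure.setIntegral_comp_smul_of_pos μ (fun y => |L y + c| ^ p) Q hθ0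
  simp only [map_smul, smul_eq_mul] at hscale
  calc θ ^ (finrank ℝ E + p) * ∫ y in Q, |L y + c| ^ p ∂μ
      = θ ^ finrank ℝ E * (θ ^ p * ∫ y in Q, |L y + c| ^ p ∂μ) := by
        rw [Real.rpow_add hθ0, Real.rpow_natCast, mul_assoc]
    _ ≤ θ ^ finrank ℝ E * ∫ y in Q, |θ * L y + c| ^ p ∂μ := by
        gcongr
        exact rpow_mul_setIntegral_abs_linear_add_rpow_le μ L c hp hθ0.le hθ1 hQb hQ
    _ = ∫ y in θ • Q, |L y + c| ^ p ∂μ := by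
        rw [hscale, mul_inv_cancel_left₀ (by positivity)]

theorem setIntegral_abs_linear_add_rpow_rpow_le (hp : 1 ≤ p) (hθ0 : 0 < θ)
    (hθ1 : θ ≤ 1) (hQb : IsBounded Q) (hQ : -Q = Q) :
    (∫ y in Q, |L y + c| ^ p ∂μ) ^ (1 / p) ≤
      θ ^ (-((finrank ℝ E : ℝ) / p + 1)) * (∫ y in θ • Q, |L y + c| ^ p ∂μ) ^ (1 / p) := by
  have hI : 0 ≤ ∫ y in Q, |L y + c| ^ p ∂μ := integral_nonneg fun _ => by positivity
  have hJ : 0 ≤ ∫ y in θ • Q, |L y + c| ^ p ∂μ := integral_nonneg fun _ => by positivity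
  have hle := rpow_mul_setIntegral_abs_linear_add_rpow_le_smul μ L c hp hθ0 hθ1 hQb hQ
  calc (∫ y in Q, |L y + c| ^ p ∂μ) ^ (1 / p)
      ≤ (θ ^ (-(finrank ℝ E + p)) * ∫ y in θ • Q, |L y + c| ^ p ∂μ) ^ (1 / p) := by
        gcongr
        rwa [Real.rpow_neg hθ0.le, inv_mul_eq_div, le_div_iff₀' (by positivity)]
    _ = θ ^ (-((finrank ℝ E : ℝ) / p + 1)) * (∫ y in θ • Q, |L y + c| ^ p ∂μ) ^ (1 / p) := by
        rw [Real.mul_rpow (by positivity) hJ, ← Real.rpow_mul hθ0.le]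
        congr 2
        field_simp

end AffineOnSymmetricSet

section Cubes

variable {ι : Type*}

theorem neg_setOf_forall_abs_lt (r : ℝ) :
    -{y : ι → ℝ | ∀ i, |y i| < r} = {y | ∀ i, |y i| < r} := by
  ext y
  simp

theorem smul_setOf_forall_abs_lt {θ : ℝ} (hθ : 0 < θ) (r : ℝ) :
    θ • {y : ι → ℝ | ∀ i, |y i| < r} = {y | ∀ i, |y i| < θ * r} := by
  ext y
  simp only [mem_smul_set_iff_inv_smul_mem₀ hθ.ne', mem_ofPred_eq, Pi.smul_apply, smul_eq_mul,
    abs_mul, abs_inv, abs_of_pos hθ, inv_mul_lt_iff₀ hθ]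

theorem isBounded_setOf_forall_abs_lt [Fintype ι] (r : ℝ) :
    IsBounded {y : ι → ℝ | ∀ i, |y i| < r} :=
  (isCompact_univ_pi fun _ : ι => isCompact_Icc (a := -r) (b := r)).isBounded.subset
    fun _ hy i _ => abs_le.1 (hy i).le

theorem setIntegral_setOf_forall_abs_sub_lt [Fintype ι] (f : (ι → ℝ) → ℝ) (x₀ : ι → ℝ) (r : ℝ) :
    ∫ x in {x : ι → ℝ | ∀ i, |x i - x₀ i| < r}, f x =
      ∫ y in {y : ι → ℝ | ∀ i, |y i| < r}, f (y + x₀) := by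
  rw [← (measurePreserving_add_right volume x₀).setIntegral_preimage_emb
    (measurableEmbedding_addRight x₀)]
  congr 2
  ext y
  simp

end Cubes

theorem stmt_3_general (n : ℕ) (p : ℝ) (hp : 1 ≤ p) (θ : ℝ) (hθ : 0 < θ) (hθ1 : θ < 1)
    (x₀ : Fin n → ℝ) (ℓ : ℝ) (v : Fin n → ℝ) (b : ℝ) :
    (∫ x in {x : Fin n → ℝ | ∀ i, |x i - x₀ i| < ℓ / 2}, |∑ i, v i * x i + b| ^ p) ^ (1 / p)
      ≤ θ ^ (-((n : ℝ) / p + 1)) *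
        (∫ x in {x : Fin n → ℝ | ∀ i, |x i - x₀ i| < θ * ℓ / 2},
            |∑ i, v i * x i + b| ^ p) ^ (1 / p) := by
  have haffine (y : Fin n → ℝ) :
      ∑ i, v i * (y + x₀) i + b = dotProductBilin ℝ ℝ v y + (v ⬝ᵥ x₀ + b) := by
    simp [dotProduct, mul_add, Finset.sum_add_distrib, add_assoc]
  simp only [setIntegral_setOf_forall_abs_sub_lt, haffine, mul_div_assoc,
    ← smul_setOf_forall_abs_lt hθ]
  have h := setIntegral_abs_linear_add_rpow_rpow_le volume (dotProductBilin ℝ ℝ v)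
    (v ⬝ᵥ x₀ + b) hp hθ hθ1.le (isBounded_setOf_forall_abs_lt (ℓ / 2)) (neg_setOf_forall_abs_lt _)
  rwa [finrank_fin_fun] at h

theorem stmt_3 (n : ℕ) (hn : 1 ≤ n) (p : ℝ) (hp : 1 ≤ p) (θ : ℝ) (hθ : 0 < θ) (hθ1 : θ < 1)
    (x₀ : Fin n → ℝ) (ℓ : ℝ) (hℓ : 0 < ℓ) (v : Fin n → ℝ) (b : ℝ) :
    (∫ x in {x : Fin n → ℝ | ∀ i, |x i - x₀ i| < ℓ / 2}, |∑ i, v i * x i + b| ^ p) ^ (1 / p)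
      ≤ θ ^ (-((n : ℝ) / p + 1)) *
        (∫ x in {x : Fin n → ℝ | ∀ i, |x i - x₀ i| < θ * ℓ / 2},
            |∑ i, v i * x i + b| ^ p) ^ (1 / p) :=
  stmt_3_general n p hp θ hθ hθ1 x₀ ℓ v b
end

section
/- Let $n \geq 1$, $p \geq 1$, $0 < \theta < 1$, and let $q \subset \mathbb{R}^n$ be a cube with concentric sub-cube $\theta q$. There exist constants $c > 0$ and $\varepsilon_0 > 0$, depending only on $n$, $p$, and $\theta$, such that whenever $\omega \subseteq q$ is measurable with $|\omega|/|q| \leq \varepsilon_0$, every affine function $a : \mathbb{R}^n \to \mathbb{R}$ satisfies $\int_\omega |a|^p\, dx \leq c\, \frac{|\omega|}{|q|} \int_{\theta q \setminus \omega} |a|^p\, dx$. -/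
/-!
Cubes are balls for the sup norm on `Fin n → ℝ`, and an affine function `a` is encoded by its
coefficients `w = (v, b)`. On this finite-dimensional space, `w ↦ ∫_{θq} |a_w|^p` is continuous,
`p`-homogeneous and positive away from `0`, so compactness of the unit sphere bounds
`sup_q |a|^p` by `K |q|⁻¹ ∫_{θq} |a|^p`, uniformly over cubes after rescaling. Integrating over
`ω` gives `∫_ω |a|^p ≤ C ∫_{θq} |a|^p` with `C = K |ω| / |q|`, and once `C ≤ 1/2` the part of the
right-hand side lying in `ω` is absorbed into the left-hand side.
-/

open MeasureTheory Metric Module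

theorem setIntegral_ball_eq_pow_smul {E F : Type*} [NormedAddCommGroup E] [NormedSpace ℝ E]
    [MeasurableSpace E] [BorelSpace E] [FiniteDimensional ℝ E] (μ : Measure E)
    [μ.IsAddHaarMeasure] [NormedAddCommGroup F] [NormedSpace ℝ F] (f : E → F) (x₀ : E)
    {ℓ : ℝ} (hℓ : 0 < ℓ) (r : ℝ) :
    ∫ x in ball x₀ (ℓ * r), f x ∂μ = ℓ ^ finrank ℝ E • ∫ y in ball 0 r, f (x₀ + ℓ • y) ∂μ := by
  have htrans : ∫ x in ball x₀ (ℓ * r), f x ∂μ = ∫ z in ball 0 (ℓ * r), f (x₀ + z) ∂μ := by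
    rw [← (measurePreserving_add_left μ x₀).setIntegral_preimage_emb
      (measurableEmbedding_addLeft x₀), preimage_add_ball, sub_self]
  rw [Measure.setIntegral_comp_smul_of_pos μ (fun z => f (x₀ + z)) _ hℓ, _root_.smul_ball hℓ.ne',
    smul_zero, Real.norm_of_nonneg hℓ.le, smul_inv_smul₀ (pow_ne_zero _ hℓ.ne'), htrans]

theorem setIntegral_le_two_mul_setIntegral_diff {X : Type*} [MeasurableSpace X] {μ : Measure X}
    {f : X → ℝ} {s t : Set X} (hf : 0 ≤ f) (hs : MeasurableSet s) (hfs : IntegrableOn f s μ)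
    (hft : IntegrableOn f t μ) {C : ℝ} (hC₀ : 0 ≤ C) (hC : C ≤ 1 / 2)
    (h : ∫ x in s, f x ∂μ ≤ C * ∫ x in t, f x ∂μ) :
    ∫ x in s, f x ∂μ ≤ 2 * C * ∫ x in t \ s, f x ∂μ := by
  have hsplit := integral_inter_add_sdiff hs hft
  have hinter : ∫ x in t ∩ s, f x ∂μ ≤ ∫ x in s, f x ∂μ :=
    setIntegral_mono_set hfs (ae_of_all _ hf) Set.inter_subset_right.eventuallyLE
  have hs₀ : 0 ≤ ∫ x in s, f x ∂μ := integral_nonneg hf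
  have hdiff₀ : 0 ≤ ∫ x in t \ s, f x ∂μ := integral_nonneg hf
  nlinarith [mul_le_mul_of_nonneg_left hinter hC₀]

theorem setOf_abs_sub_lt_eq_ball {n : ℕ} (x₀ : Fin n → ℝ) {r : ℝ} (hr : 0 < r) :
    {x : Fin n → ℝ | ∀ i, |x i - x₀ i| < r} = ball x₀ r := by
  ext x
  simp [ball_pi x₀ hr, Real.dist_eq]

section Affine

variable {n : ℕ}

def affineFun (w : (Fin n → ℝ) × ℝ) (x : Fin n → ℝ) : ℝ := ∑ i, w.1 i * x i + w.2

theorem continuous_affineFun :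
    Continuous (Function.uncurry (affineFun : (Fin n → ℝ) × ℝ → (Fin n → ℝ) → ℝ)) := by
  unfold affineFun Function.uncurry
  fun_prop

theorem affineFun_smul (c : ℝ) (w : (Fin n → ℝ) × ℝ) (x : Fin n → ℝ) :
    affineFun (c • w) x = c * affineFun w x := by
  simp only [affineFun, Prod.smul_fst, Prod.smul_snd, Pi.smul_apply, smul_eq_mul, mul_add,
    Finset.mul_sum, mul_assoc]

theorem affineFun_add_smul (w : (Fin n → ℝ) × ℝ) (x₀ : Fin n → ℝ) (ℓ : ℝ) (y : Fin n → ℝ) :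
    affineFun w (x₀ + ℓ • y) = affineFun (ℓ • w.1, affineFun w x₀) y := by
  simp only [affineFun, Pi.add_apply, Pi.smul_apply, smul_eq_mul, mul_add,
    Finset.sum_add_distrib, mul_assoc, mul_left_comm ℓ]
  ring

theorem eq_zero_of_affineFun_eq_zero_on_ball {w : (Fin n → ℝ) × ℝ} {r : ℝ} (hr : 0 < r)
    (h : ∀ x ∈ ball 0 r, affineFun w x = 0) : w = 0 := by
  have hb : w.2 = 0 := by simpa [affineFun] using h 0 (mem_ball_self hr)
  refine Prod.ext (funext fun i => ?_) hb
  have hx : Pi.single i (r / 2) ∈ ball (0 : Fin n → ℝ) r := by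
    rw [mem_ball_zero_iff, Pi.norm_single, Real.norm_of_nonneg (by positivity)]
    linarith
  have := h _ hx
  simp only [affineFun, hb, add_zero, Pi.single_apply, mul_ite, mul_zero,
    Finset.sum_ite_eq', Finset.mem_univ, if_true] at this
  simpa [hr.ne'] using this


noncomputable def affineIntegral (p r : ℝ) (w : (Fin n → ℝ) × ℝ) : ℝ :=
  ∫ y in ball 0 r, |affineFun w y| ^ p

theorem continuous_rpow_abs_affineFun {p : ℝ} (hp : 0 ≤ p) :
    Continuous (fun z : ((Fin n → ℝ) × ℝ) × (Fin n → ℝ) => |affineFun z.1 z.2| ^ p) :=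
  continuous_affineFun.abs.rpow_const fun _ => Or.inr hp

theorem integrableOn_rpow_abs_affineFun {p : ℝ} (hp : 0 ≤ p) (w : (Fin n → ℝ) × ℝ)
    {s : Set (Fin n → ℝ)} (hs : Bornology.IsBounded s) :
    IntegrableOn (fun x => |affineFun w x| ^ p) s := by
  obtain ⟨R, hR⟩ := hs.subset_closedBall 0
  exact ((continuous_rpow_abs_affineFun hp).comp (Continuous.prodMk_right w)).locallyIntegrable
    |>.integrableOn_isCompact (isCompact_closedBall 0 R) |>.mono_set hR

theorem continuous_affineIntegral {p : ℝ} (hp : 0 ≤ p) (r : ℝ) :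
    Continuous (affineIntegral (n := n) p r) := by
  have h : affineIntegral (n := n) p r =
      fun w => ∫ y in closedBall 0 r, |affineFun w y| ^ p ∂volume.restrict (ball 0 r) := by
    ext w
    rw [Measure.restrict_restrict measurableSet_closedBall,
      Set.inter_eq_right.2 ball_subset_closedBall, affineIntegral]
  rw [h]
  exact continuous_parametric_integral_of_continuous (continuous_rpow_abs_affineFun hp)
    (isCompact_closedBall 0 r)

theorem affineIntegral_smul (p r c : ℝ) (w : (Fin n → ℝ) × ℝ) :
    affineIntegral p r (c • w) = |c| ^ p * affineIntegral p r w := by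
  simp only [affineIntegral, affineFun_smul, abs_mul,
    Real.mul_rpow (abs_nonneg _) (abs_nonneg _), integral_const_mul]

theorem affineIntegral_pos {p r : ℝ} (hp : 0 < p) (hr : 0 < r) {w : (Fin n → ℝ) × ℝ}
    (hw : w ≠ 0) : 0 < affineIntegral p r w := by
  have hcont : Continuous (fun x => |affineFun w x| ^ p) :=
    (continuous_rpow_abs_affineFun hp.le).comp (Continuous.prodMk_right w)
  refine (setIntegral_nonneg measurableSet_ball fun x _ => by positivity).lt_of_ne' fun h0 => hw ?_
  rw [setIntegral_eq_zero_iff_of_nonneg_ae (ae_of_all _ fun x => by positivity)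
    (integrableOn_rpow_abs_affineFun hp.le w isBounded_ball)] at h0
  have hzero := Measure.eqOn_open_of_ae_eq h0 isOpen_ball hcont.continuousOn
    continuousOn_const
  exact eq_zero_of_affineFun_eq_zero_on_ball hr fun x hx => by
    simpa [hp.ne'] using hzero hx

theorem exists_rpow_abs_affineFun_le_mul_affineIntegral {p r : ℝ} (hp : 0 < p) (hr : 0 < r)
    (R : ℝ) : ∃ K, 0 < K ∧ ∀ (w : (Fin n → ℝ) × ℝ), ∀ x ∈ closedBall 0 R,
      |affineFun w x| ^ p ≤ K * affineIntegral p r w := by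
  have hcont : ContinuousOn
      (fun z : ((Fin n → ℝ) × ℝ) × (Fin n → ℝ) => |affineFun z.1 z.2| ^ p /
        affineIntegral p r z.1) (sphere 0 1 ×ˢ closedBall 0 R) := by
    refine (continuous_rpow_abs_affineFun hp.le).continuousOn.div
      ((continuous_affineIntegral hp.le r).comp continuous_fst).continuousOn fun z hz => ?_
    exact (affineIntegral_pos hp hr (ne_zero_of_mem_unit_sphere ⟨z.1, hz.1⟩)).ne'
  obtain ⟨C, hC⟩ :=
    ((isCompact_sphere 0 1).prod (isCompact_closedBall 0 R)).exists_bound_of_continuousOn hcont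
  refine ⟨max C 1, by positivity, fun w x hx => ?_⟩
  rcases eq_or_ne w 0 with rfl | hw
  · simp [affineFun, affineIntegral, Real.zero_rpow hp.ne']
  set u := ‖w‖⁻¹ • w
  have hu : u ∈ sphere (0 : (Fin n → ℝ) × ℝ) 1 := by
    simp [u, norm_smul, inv_mul_cancel₀ (norm_ne_zero_iff.2 hw)]
  have hw_eq : w = ‖w‖ • u := (smul_inv_smul₀ (norm_ne_zero_iff.2 hw) w).symm
  have hFu := affineIntegral_pos hp hr (ne_zero_of_mem_unit_sphere ⟨u, hu⟩)
  have hbound : |affineFun u x| ^ p ≤ max C 1 * affineIntegral p r u := by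
    have := (le_abs_self _).trans ((hC (u, x) ⟨hu, hx⟩).trans (le_max_left C 1))
    rwa [div_le_iff₀ hFu] at this
  rw [hw_eq, affineFun_smul, affineIntegral_smul, abs_mul,
    Real.mul_rpow (abs_nonneg _) (abs_nonneg _), mul_left_comm]
  gcongr

theorem rpow_abs_affineFun_le_setIntegral_ball {p r R K : ℝ}
    (hK : ∀ (w : (Fin n → ℝ) × ℝ), ∀ y ∈ closedBall 0 R,
      |affineFun w y| ^ p ≤ K * affineIntegral p r w)
    {x₀ : Fin n → ℝ} {ℓ : ℝ} (hℓ : 0 < ℓ) (w : (Fin n → ℝ) × ℝ) {x : Fin n → ℝ}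
    (hx : x ∈ closedBall x₀ (ℓ * R)) :
    |affineFun w x| ^ p ≤ K / ℓ ^ n * ∫ y in ball x₀ (ℓ * r), |affineFun w y| ^ p := by
  set y := ℓ⁻¹ • (x - x₀)
  have hxy : x = x₀ + ℓ • y := by simp [y, smul_inv_smul₀ hℓ.ne']
  have hy : y ∈ closedBall 0 R := by
    rw [mem_closedBall_zero_iff, norm_smul, Real.norm_of_nonneg (inv_nonneg.2 hℓ.le),
      inv_mul_le_iff₀ hℓ, ← dist_eq_norm]
    exact hx
  rw [setIntegral_ball_eq_pow_smul volume _ x₀ hℓ, Module.finrank_fin_fun, smul_eq_mul, hxy]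
  simp_rw [affineFun_add_smul]
  rw [← mul_assoc, div_mul_cancel₀ _ (pow_ne_zero _ hℓ.ne')]
  exact hK _ y hy

theorem exists_setIntegral_rpow_abs_affineFun_le {p r : ℝ} (hp : 0 < p) (hr : 0 < r) (R : ℝ) :
    ∃ K, 0 < K ∧ ∀ (x₀ : Fin n → ℝ) (ℓ : ℝ), 0 < ℓ → ∀ ω ⊆ closedBall x₀ (ℓ * R),
      ∀ (w : (Fin n → ℝ) × ℝ), ∫ x in ω, |affineFun w x| ^ p ≤
        K * ((volume ω).toReal / ℓ ^ n) * ∫ y in ball x₀ (ℓ * r), |affineFun w y| ^ p := by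
  obtain ⟨K, hK, hbound⟩ := exists_rpow_abs_affineFun_le_mul_affineIntegral (n := n) hp hr R
  refine ⟨K, hK, fun x₀ ℓ hℓ ω hω w => ?_⟩
  have hpt : ∀ x ∈ ω, ‖|affineFun w x| ^ p‖ ≤
      K / ℓ ^ n * ∫ y in ball x₀ (ℓ * r), |affineFun w y| ^ p := fun x hx => by
    rw [Real.norm_of_nonneg (by positivity)]
    exact rpow_abs_affineFun_le_setIntegral_ball hbound hℓ w (hω hx)
  have hω_fin : volume ω < ⊤ := (isBounded_closedBall.subset hω).measure_lt_top
  refine (le_abs_self _).trans ((norm_setIntegral_le_of_norm_le_const hω_fin hpt).trans_eq ?_)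
  rw [Measure.real]
  ring

end Affine

theorem stmt_4_general (n : ℕ) (p : ℝ) (hp : 1 ≤ p) (θ : ℝ) (hθ : 0 < θ) :
    ∃ c : ℝ, 0 < c ∧ ∃ ε₀ : ℝ, 0 < ε₀ ∧
      ∀ (x₀ : Fin n → ℝ) (ℓ : ℝ), 0 < ℓ →
        ∀ (ω : Set (Fin n → ℝ)), MeasurableSet ω →
          ω ⊆ {x : Fin n → ℝ | ∀ i, |x i - x₀ i| < ℓ / 2} →
          (volume ω).toReal / ℓ ^ n ≤ ε₀ →
          ∀ (v : Fin n → ℝ) (b : ℝ),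
            ∫ x in ω, |∑ i, v i * x i + b| ^ p
              ≤ c * ((volume ω).toReal / ℓ ^ n) *
                ∫ x in {x : Fin n → ℝ | ∀ i, |x i - x₀ i| < θ * ℓ / 2} \ ω,
                  |∑ i, v i * x i + b| ^ p := by
  have hp₀ : 0 < p := one_pos.trans_le hp
  obtain ⟨K, hK, hrigid⟩ :=
    exists_setIntegral_rpow_abs_affineFun_le (n := n) hp₀ (half_pos hθ) (1 / 2)
  refine ⟨2 * K, by positivity, (2 * K)⁻¹, by positivity, fun x₀ ℓ hℓ ω hω hωq hsmall v b => ?_⟩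
  rw [setOf_abs_sub_lt_eq_ball x₀ (half_pos hℓ), show ℓ / 2 = ℓ * (1 / 2) by ring] at hωq
  rw [setOf_abs_sub_lt_eq_ball x₀ (by positivity), show θ * ℓ / 2 = ℓ * (θ / 2) by ring]
  set t := (volume ω).toReal / ℓ ^ n
  have hKt : K * t ≤ 1 / 2 := calc
    K * t ≤ K * (2 * K)⁻¹ := mul_le_mul_of_nonneg_left hsmall hK.le
    _ = 1 / 2 := by field_simp
  have hωsub : ω ⊆ closedBall x₀ (ℓ * (1 / 2)) := hωq.trans ball_subset_closedBall
  calc ∫ x in ω, |affineFun (v, b) x| ^ p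
      ≤ 2 * (K * t) * ∫ x in ball x₀ (ℓ * (θ / 2)) \ ω, |affineFun (v, b) x| ^ p :=
        setIntegral_le_two_mul_setIntegral_diff (fun x => by positivity) hω
          (integrableOn_rpow_abs_affineFun hp₀.le _ (isBounded_closedBall.subset hωsub))
          (integrableOn_rpow_abs_affineFun hp₀.le _ isBounded_ball) (by positivity) hKt
          (hrigid x₀ ℓ hℓ ω hωsub (v, b))
    _ = 2 * K * t * ∫ x in ball x₀ (ℓ * (θ / 2)) \ ω, |affineFun (v, b) x| ^ p := by ring

theorem stmt_4 (n : ℕ) (hn : 1 ≤ n) (p : ℝ) (hp : 1 ≤ p) (θ : ℝ) (hθ : 0 < θ) (hθ1 : θ < 1) :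
    ∃ c : ℝ, 0 < c ∧ ∃ ε₀ : ℝ, 0 < ε₀ ∧
      ∀ (x₀ : Fin n → ℝ) (ℓ : ℝ), 0 < ℓ →
        ∀ (ω : Set (Fin n → ℝ)), MeasurableSet ω →
          ω ⊆ {x : Fin n → ℝ | ∀ i, |x i - x₀ i| < ℓ / 2} →
          (volume ω).toReal / ℓ ^ n ≤ ε₀ →
          ∀ (v : Fin n → ℝ) (b : ℝ),
            ∫ x in ω, |∑ i, v i * x i + b| ^ p
              ≤ c * ((volume ω).toReal / ℓ ^ n) *
                ∫ x in {x : Fin n → ℝ | ∀ i, |x i - x₀ i| < θ * ℓ / 2} \ ω,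
                  |∑ i, v i * x i + b| ^ p :=
  stmt_4_general n p hp θ hθ
end

section
/- Let $n \geq 1$ and $\delta > 0$. Consider the dyadic family of cubes: for each integer $k \geq 0$, cubes of the form $z + (0, \delta 2^{-k})^n$ with $z \in \delta 2^{-k} \mathbb{Z}^n$. Suppose $q_1$ and $q_2$ are two such cubes (possibly of different generations $k_1, k_2$ with $|k_1 - k_2| \leq 1$), and let $q_i''$ denote the cube with the same center as $q_i$ dilated by the factor $4/3$. If $q_1'' \cap q_2'' \neq \emptyset$, then $|q_1'' \cap q_2''| \geq 4^{-n} \max\{|q_1|, |q_2|\}$. -/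
/-!
Along each coordinate the enlarged cube of `z + (0, ℓ)^n` is the interval `(z - ℓ/6, z + 7ℓ/6)`,
so the intersection of two enlarged cubes is a box and it suffices to bound each of its sides
below by a quarter of the larger side `ℓ`; the smaller side `ℓ'` is `ℓ` or `ℓ/2`. Both corners
lie on `ℓ'ℤ`, so the fact that the two intervals meet leaves only a few integer values for
`(z₁ - z₂)/ℓ'`, each giving an overlap of at least `ℓ/4`, with equality when `ℓ' = ℓ/2` and the
cubes share a corner.
-/

open MeasureTheory

/-- The enlarged cube (factor `4/3`) of the dyadic cube `z + (0, ℓ)^n`: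
the open cube with the same center `z + (ℓ/2, …, ℓ/2)` and side `(4/3)ℓ`. -/
def enlargedCube (n : ℕ) (z : Fin n → ℝ) (ℓ : ℝ) : Set (Fin n → ℝ) :=
  {x | ∀ i, |x i - (z i + ℓ / 2)| < (2 / 3) * ℓ}

open Set

lemma enlargedCube_eq_pi (n : ℕ) (z : Fin n → ℝ) (ℓ : ℝ) :
    enlargedCube n z ℓ = univ.pi fun i => Ioo (z i - ℓ / 6) (z i + 7 * ℓ / 6) := by
  ext x
  simp only [enlargedCube, mem_pi, mem_univ, true_implies, mem_Ioo, abs_lt]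
  refine forall_congr' fun i => ?_
  constructor <;> rintro ⟨h₁, h₂⟩ <;> constructor <;> linarith

lemma le_volume_Ioo_inter_Ioo {a b a' b' m : ℝ} (h₁ : m ≤ b - a) (h₂ : m ≤ b' - a')
    (h₃ : m ≤ b - a') (h₄ : m ≤ b' - a) :
    ENNReal.ofReal m ≤ volume (Ioo a b ∩ Ioo a' b') := by
  rw [Ioo_inter_Ioo, Real.volume_Ioo]
  refine ENNReal.ofReal_le_ofReal ?_
  rcases max_cases a a' with ⟨ha, -⟩ | ⟨ha, -⟩ <;> rcases min_cases b b' with ⟨hb, -⟩ | ⟨hb, -⟩ <;>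
    rw [ha, hb] <;> assumption

lemma intCast_mul_le_of_mul_lt_add_one {t k : ℤ} {u : ℝ} (hu : 0 < u)
    (h : t * u < (k + 1) * u) : (t : ℝ) * u ≤ k * u := by
  have htk : t < k + 1 := by exact_mod_cast lt_of_mul_lt_mul_right h hu.le
  exact mul_le_mul_of_nonneg_right (by exact_mod_cast Int.lt_add_one_iff.1 htk) hu.le

lemma le_volume_enlargedInterval_inter {ℓ ℓ' : ℝ} (hℓ : 0 < ℓ) (hℓ' : ℓ' = ℓ ∨ ℓ' = ℓ / 2)
    (m₁ m₂ : ℤ)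
    (hne : (Ioo (m₁ * ℓ - ℓ / 6) (m₁ * ℓ + 7 * ℓ / 6) ∩
      Ioo (m₂ * ℓ' - ℓ' / 6) (m₂ * ℓ' + 7 * ℓ' / 6)).Nonempty) :
    ENNReal.ofReal (ℓ / 4) ≤ volume (Ioo (m₁ * ℓ - ℓ / 6) (m₁ * ℓ + 7 * ℓ / 6) ∩
      Ioo (m₂ * ℓ' - ℓ' / 6) (m₂ * ℓ' + 7 * ℓ' / 6)) := by
  obtain ⟨x, ⟨hx₁, hx₂⟩, hx₃, hx₄⟩ := hne
  rcases hℓ' with rfl | rfl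
  · have h₁ := intCast_mul_le_of_mul_lt_add_one (t := m₁ - m₂) (k := 1) hℓ
      (by push_cast; linarith)
    have h₂ := intCast_mul_le_of_mul_lt_add_one (t := m₂ - m₁) (k := 1) hℓ
      (by push_cast; linarith)
    push_cast at h₁ h₂
    apply le_volume_Ioo_inter_Ioo <;> linarith
  · have h₁ := intCast_mul_le_of_mul_lt_add_one (t := 2 * m₁ - m₂) (k := 1) (half_pos hℓ)
      (by push_cast; linarith)
    have h₂ := intCast_mul_le_of_mul_lt_add_one (t := m₂ - 2 * m₁) (k := 2) (half_pos hℓ)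
      (by push_cast; linarith)
    push_cast at h₁ h₂
    apply le_volume_Ioo_inter_Ioo <;> linarith

lemma le_volume_enlargedCube_inter {n : ℕ} {ℓ ℓ' : ℝ} (hℓ : 0 < ℓ) (hℓ' : ℓ' = ℓ ∨ ℓ' = ℓ / 2)
    (m₁ m₂ : Fin n → ℤ)
    (hne : (enlargedCube n (fun i => m₁ i * ℓ) ℓ ∩ enlargedCube n (fun i => m₂ i * ℓ') ℓ').Nonempty) :
    ENNReal.ofReal ((ℓ / 4) ^ n) ≤
      volume (enlargedCube n (fun i => m₁ i * ℓ) ℓ ∩ enlargedCube n (fun i => m₂ i * ℓ') ℓ') := by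
  rw [enlargedCube_eq_pi, enlargedCube_eq_pi, ← pi_inter_distrib] at hne ⊢
  obtain ⟨x, hx⟩ := hne
  rw [volume_pi_pi, ENNReal.ofReal_pow (by positivity), ← Fin.prod_const]
  exact Finset.prod_le_prod' fun i _ =>
    le_volume_enlargedInterval_inter hℓ hℓ' (m₁ i) (m₂ i) ⟨x i, hx i (mem_univ i)⟩

theorem stmt_15_general (n : ℕ) (δ : ℝ) (hδ : 0 < δ)
    (k₁ k₂ : ℕ) (hk : k₁ ≤ k₂ + 1 ∧ k₂ ≤ k₁ + 1)
    (z₁ z₂ : Fin n → ℝ)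
    (hz₁ : ∃ m : Fin n → ℤ, ∀ i, z₁ i = (m i : ℝ) * (δ / 2 ^ k₁))
    (hz₂ : ∃ m : Fin n → ℤ, ∀ i, z₂ i = (m i : ℝ) * (δ / 2 ^ k₂))
    (hne : (enlargedCube n z₁ (δ / 2 ^ k₁) ∩ enlargedCube n z₂ (δ / 2 ^ k₂)).Nonempty) :
    ENNReal.ofReal ((4:ℝ)⁻¹ ^ n * max ((δ / 2 ^ k₁) ^ n) ((δ / 2 ^ k₂) ^ n))
      ≤ volume (enlargedCube n z₁ (δ / 2 ^ k₁) ∩ enlargedCube n z₂ (δ / 2 ^ k₂)) := by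
  wlog hk₁₂ : k₁ ≤ k₂ generalizing k₁ k₂ z₁ z₂
  · rw [inter_comm, max_comm]
    exact this k₂ k₁ hk.symm z₂ z₁ hz₂ hz₁ (by rwa [inter_comm]) (by omega)
  obtain ⟨m₁, rfl⟩ := hz₁.imp fun _ hm => funext hm
  obtain ⟨m₂, rfl⟩ := hz₂.imp fun _ hm => funext hm
  have hside : δ / 2 ^ k₂ = δ / 2 ^ k₁ ∨ δ / 2 ^ k₂ = δ / 2 ^ k₁ / 2 := by
    obtain rfl | rfl : k₂ = k₁ ∨ k₂ = k₁ + 1 := by omega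
    exacts [Or.inl rfl, Or.inr (by rw [pow_succ, div_div])]
  have hmax : max ((δ / 2 ^ k₁) ^ n) ((δ / 2 ^ k₂) ^ n) = (δ / 2 ^ k₁) ^ n :=
    max_eq_left <| pow_le_pow_left₀ (by positivity)
      (div_le_div_of_nonneg_left hδ.le (by positivity) (pow_le_pow_right₀ one_le_two hk₁₂)) n
  rw [hmax, ← mul_pow, inv_mul_eq_div]
  exact le_volume_enlargedCube_inter (by positivity) hside m₁ m₂ hne

theorem stmt_15 (n : ℕ) (hn : 1 ≤ n) (δ : ℝ) (hδ : 0 < δ)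
    (k₁ k₂ : ℕ) (hk : k₁ ≤ k₂ + 1 ∧ k₂ ≤ k₁ + 1)
    (z₁ z₂ : Fin n → ℝ)
    (hz₁ : ∃ m : Fin n → ℤ, ∀ i, z₁ i = (m i : ℝ) * (δ / 2 ^ k₁))
    (hz₂ : ∃ m : Fin n → ℤ, ∀ i, z₂ i = (m i : ℝ) * (δ / 2 ^ k₂))
    (hne : (enlargedCube n z₁ (δ / 2 ^ k₁) ∩ enlargedCube n z₂ (δ / 2 ^ k₂)).Nonempty) :
    ENNReal.ofReal ((4:ℝ)⁻¹ ^ n * max ((δ / 2 ^ k₁) ^ n) ((δ / 2 ^ k₂) ^ n))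
      ≤ volume (enlargedCube n z₁ (δ / 2 ^ k₁) ∩ enlargedCube n z₂ (δ / 2 ^ k₂)) :=
  stmt_15_general n δ hδ k₁ k₂ hk z₁ z₂ hz₁ hz₂ hne
end
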